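/- arXiv:1802.02016 — 3 statements merged into one kernel-verified Lean document; each statement's English description precedes it below -/
import Mathlib

section
/- Let n,m be positive integers, θ>0, and ξ,ξ'>0 with ξ ≠ ξ'. Let E = Σ_{j=1}^n z_j ∂/∂z_j + Σ_{k=1}^m w_k ∂/∂w_k be the Euler operator acting on polynomials. Then for all p,q ∈ ℂ[z_1,…,z_n,w_1,…,w_m] one has ⟨E p, q⟩'_{n,m,θ} = ⟨p, E q⟩'_{n,m,θ}. -/
/-!
Both `Δ_n` and the cross factor of `Δ_{n,m}` depend only on ratios of coordinates, so the
weight is invariant under rotating all angles by a common `a`, whereas the integrand of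
`⟨p, q⟩'` with `p`, `q` homogeneous of degrees `d`, `e` picks up the factor `e^{i(d-e)a}`.
Hence homogeneous components of different degrees are orthogonal. By Euler's identity `E` acts
on the component of degree `d` as multiplication by the real number `d`, so it is symmetric.
To make the rotation a measure-preserving translation, the integral over `[0, 2π]^{n+m}` is
moved to the compact group `(ℝ ⧸ 2πℤ)^{n+m}` with its Haar measure.
-/

open MeasureTheory MvPolynomial Complex

noncomputable section

/-- The cube of angles `[0, 2π]^n`. -/
def cube (n : ℕ) : Set (Fin n → ℝ) := Set.univ.pi fun _ => Set.Icc (0 : ℝ) (2 * Real.pi)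

/-- The point of the torus `T_ξ^n` with angles `x`. -/
def torus (n : ℕ) (ξ : ℝ) (x : Fin n → ℝ) : Fin n → ℂ :=
  fun j => (ξ : ℂ) * Complex.exp (Complex.I * (x j : ℂ))

/-- `Δ_N(z; θ) = ∏_{j<k} ((1 - z_j/z_k)(1 - z_k/z_j))^θ`, whose base equals
`|1 - z_j/z_k|^2 ≥ 0` on a torus, so it is defined via the real power. -/
def DeltaN (N : ℕ) (θ : ℝ) (z : Fin N → ℂ) : ℝ :=
  ∏ j : Fin N, ∏ k : Fin N,
    if j < k then (‖1 - z j / z k‖ ^ 2) ^ θ else 1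

/-- `Δ_{n,m}(z,w;θ) = Δ_n(z;θ) Δ_m(w;1/θ) / ∏_{j,k} (1 - z_j/w_k)(1 - w_k/z_j)`. -/
def DeltaNM (n m : ℕ) (θ : ℝ) (z : Fin n → ℂ) (w : Fin m → ℂ) : ℂ :=
  ((DeltaN n θ z * DeltaN m θ⁻¹ w : ℝ) : ℂ) /
    ∏ j : Fin n, ∏ k : Fin m, ((1 - z j / w k) * (1 - w k / z j))

/-- `q*(v) = conj (q(1/conj v))`. -/
def starEval {σ : Type*} (q : MvPolynomial σ ℂ) (v : σ → ℂ) : ℂ :=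
  starRingEnd ℂ (MvPolynomial.eval (fun i => ((starRingEnd ℂ) (v i))⁻¹) q)

/-- The sesquilinear product `⟨p,q⟩'_{n,m,θ}` with radii `ξ, ξ'`. -/
def sprod (n m : ℕ) (θ ξ ξ' : ℝ) (p q : MvPolynomial (Fin n ⊕ Fin m) ℂ) : ℂ :=
  ((1 / (n.factorial * m.factorial * (2 * Real.pi) ^ (n + m)) : ℝ) : ℂ) *
    ∫ x in cube n, ∫ y in cube m,
      DeltaNM n m θ (torus n ξ x) (torus m ξ' y) *
        MvPolynomial.eval (Sum.elim (torus n ξ x) (torus m ξ' y)) p *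
        starEval q (Sum.elim (torus n ξ x) (torus m ξ' y))

/-- The Euler operator `E = Σ_v x_v ∂/∂x_v` on polynomials. -/
def eulerOp {σ : Type*} [Fintype σ] (p : MvPolynomial σ ℂ) : MvPolynomial σ ℂ :=
  ∑ v : σ, MvPolynomial.X v * MvPolynomial.pderiv v p


theorem MvPolynomial.IsHomogeneous.eval_smul {σ R : Type*} [CommSemiring R]
    {φ : MvPolynomial σ R} {d : ℕ} (hφ : φ.IsHomogeneous d) (c : R) (x : σ → R) :
    eval (c • x) φ = c ^ d * eval x φ := by
  rw [eval_eq, eval_eq, Finset.mul_sum]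
  refine Finset.sum_congr rfl fun a ha => ?_
  simp only [Pi.smul_apply, smul_eq_mul, mul_pow, Finset.prod_mul_distrib,
    Finset.prod_pow_eq_pow_sum, ← hφ.degree_eq_sum_deg_support ha]
  ring

theorem starEval_smul_of_isHomogeneous {σ : Type*} {q : MvPolynomial σ ℂ} {e : ℕ}
    (hq : q.IsHomogeneous e) (c : ℂ) (v : σ → ℂ) :
    starEval q (c • v) = c⁻¹ ^ e * starEval q v := by
  have : (fun i => (starRingEnd ℂ ((c • v) i))⁻¹) =
      (starRingEnd ℂ c)⁻¹ • fun i => (starRingEnd ℂ (v i))⁻¹ := by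
    ext i; simp [mul_comm]
  rw [starEval, this, hq.eval_smul, map_mul, map_pow, map_inv₀, Complex.conj_conj, starEval]

theorem starEval_smul {σ : Type*} (c : ℂ) (q : MvPolynomial σ ℂ) (v : σ → ℂ) :
    starEval (c • q) v = starRingEnd ℂ c * starEval q v := by
  simp [starEval, smul_eval]

theorem starEval_sum {σ ι : Type*} (s : Finset ι) (Q : ι → MvPolynomial σ ℂ) (v : σ → ℂ) :
    starEval (∑ i ∈ s, Q i) v = ∑ i ∈ s, starEval (Q i) v := by
  simp [starEval]

theorem Continuous.starEval {X σ : Type*} [TopologicalSpace X] (q : MvPolynomial σ ℂ)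
    {f : X → σ → ℂ} (hf : Continuous f) (hf0 : ∀ x i, f x i ≠ 0) :
    Continuous fun x => starEval q (f x) :=
  continuous_conj.comp <| (continuous_eval q).comp <| continuous_pi fun i =>
    (continuous_conj.comp ((continuous_apply i).comp hf)).inv₀ fun x => by simpa using hf0 x i

theorem eulerOp_eq_sum_homogeneousComponent {σ : Type*} [Fintype σ] (p : MvPolynomial σ ℂ) :
    eulerOp p = ∑ d ∈ Finset.range (p.totalDegree + 1), (d : ℂ) • homogeneousComponent d p := by
  conv_lhs => rw [← sum_homogeneousComponent p]
  simp only [eulerOp, map_sum, Finset.mul_sum]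
  rw [Finset.sum_comm]
  refine Finset.sum_congr rfl fun d _ => ?_
  rw [(homogeneousComponent_isHomogeneous d p).sum_X_mul_pderiv, Nat.cast_smul_eq_nsmul]

local notation "𝕋" => AddCircle (2 * Real.pi)

instance : Fact (0 < 2 * Real.pi) := ⟨Real.two_pi_pos⟩

theorem measurePreserving_coe_cube (k : ℕ) :
    MeasurePreserving (fun (x : Fin k → ℝ) (i : Fin k) => (x i : 𝕋))
      (volume.restrict (cube k)) volume := by
  have hIoc : volume.restrict (cube k) =
      Measure.pi fun _ : Fin k => volume.restrict (Set.Ioc 0 (2 * Real.pi)) := by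
    rw [cube, volume_pi, ← Measure.restrict_congr_set Measure.pi_Ioc_ae_eq_pi_Icc,
      Measure.restrict_pi_pi]
  rw [hIoc, volume_pi]
  exact measurePreserving_pi _ _ fun _ => by
    simpa using AddCircle.measurePreserving_mk (2 * Real.pi) 0

section CubeIntegral

variable {E : Type*} [NormedAddCommGroup E] [NormedSpace ℝ E]

theorem integral_cube_comp_coe {k : ℕ} {g : (Fin k → 𝕋) → E}
    (hg : AEStronglyMeasurable g volume) :
    ∫ x in cube k, g (fun i => (x i : 𝕋)) = ∫ u, g u := by
  have h := measurePreserving_coe_cube k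
  rw [← integral_map h.aemeasurable (h.map_eq ▸ hg), h.map_eq]

theorem integral_cube_cube_comp_coe {n m : ℕ} {F : (Fin n → 𝕋) × (Fin m → 𝕋) → E}
    (hF : Continuous F) :
    ∫ x in cube n, ∫ y in cube m, F (fun j => (x j : 𝕋), fun k => (y k : 𝕋)) = ∫ w, F w := by
  have hinner (u : Fin n → 𝕋) : ∫ y in cube m, F (u, fun k => (y k : 𝕋)) = ∫ v, F (u, v) :=
    integral_cube_comp_coe (hF.comp (Continuous.prodMk_right u)).aestronglyMeasurable
  simp_rw [hinner]
  rw [integral_cube_comp_coe hF.aestronglyMeasurable.integral_prod_right',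
    ← integral_prod F (hF.integrable_of_hasCompactSupport (.of_compactSpace F))]
  rfl

end CubeIntegral

theorem integral_eq_zero_of_add_right_eq_mul {G : Type*} [MeasurableSpace G] [AddGroup G]
    [MeasurableAdd G] {μ : Measure G} [μ.IsAddRightInvariant] {F : G → ℂ} {g : G} {c : ℂ}
    (hc : c ≠ 1) (hF : ∀ w, F (w + g) = c * F w) : ∫ w, F w ∂μ = 0 := by
  have h := integral_add_right_eq_self F g (μ := μ)
  simp_rw [hF, integral_const_mul] at h
  by_contra hI
  exact hc ((mul_eq_right₀ hI).1 h)

theorem deltaN_smul {N : ℕ} (θ : ℝ) {c : ℂ} (hc : c ≠ 0) (z : Fin N → ℂ) :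
    DeltaN N θ (c • z) = DeltaN N θ z := by
  simp only [DeltaN, Pi.smul_apply, smul_eq_mul, mul_div_mul_left _ _ hc]

theorem deltaNM_smul {n m : ℕ} (θ : ℝ) {c : ℂ} (hc : c ≠ 0) (z : Fin n → ℂ) (w : Fin m → ℂ) :
    DeltaNM n m θ (c • z) (c • w) = DeltaNM n m θ z w := by
  simp only [DeltaNM, deltaN_smul _ hc, Pi.smul_apply, smul_eq_mul, mul_div_mul_left _ _ hc]

section Continuity

variable {X : Type*} [TopologicalSpace X]

theorem Continuous.deltaN {N : ℕ} {θ : ℝ} (hθ : 0 ≤ θ) {f : X → Fin N → ℂ} (hf : Continuous f)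
    (hf0 : ∀ x k, f x k ≠ 0) : Continuous fun x => DeltaN N θ (f x) := by
  refine continuous_finsetProd _ fun j _ => continuous_finsetProd _ fun k _ => ?_
  by_cases hjk : j < k
  · simp only [hjk, if_true]
    have hquot : Continuous fun x => f x j / f x k :=
      ((continuous_apply j).comp hf).div ((continuous_apply k).comp hf) fun x => hf0 x k
    exact ((continuous_const.sub hquot).norm.pow 2).rpow_const fun _ => Or.inr hθ
  · simp only [hjk, if_false, continuous_const]

theorem Continuous.deltaNM {n m : ℕ} {θ : ℝ} (hθ : 0 ≤ θ) {f : X → Fin n → ℂ}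
    {g : X → Fin m → ℂ} (hf : Continuous f) (hg : Continuous g) (hf0 : ∀ x j, f x j ≠ 0)
    (hg0 : ∀ x k, g x k ≠ 0) (hfg : ∀ x j k, f x j ≠ g x k) :
    Continuous fun x => DeltaNM n m θ (f x) (g x) := by
  have hfj (j : Fin n) : Continuous fun x => f x j := (continuous_apply j).comp hf
  have hgk (k : Fin m) : Continuous fun x => g x k := (continuous_apply k).comp hg
  refine (continuous_ofReal.comp ((hf.deltaN hθ hf0).mul (hg.deltaN (inv_nonneg.2 hθ) hg0))).div
    (continuous_finsetProd _ fun j _ => continuous_finsetProd _ fun k _ =>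
      (continuous_const.sub ((hfj j).div (hgk k) fun x => hg0 x k)).mul
        (continuous_const.sub ((hgk k).div (hfj j) fun x => hf0 x j))) fun x => ?_
  refine Finset.prod_ne_zero_iff.2 fun j _ => Finset.prod_ne_zero_iff.2 fun k _ => ?_
  refine mul_ne_zero (sub_ne_zero.2 fun h => hfg x j k ?_) (sub_ne_zero.2 fun h => hfg x j k ?_)
  · exact (div_eq_one_iff_eq (hg0 x k)).1 h.symm
  · exact ((div_eq_one_iff_eq (hf0 x j)).1 h.symm).symm

end Continuity

def torusPoint {ι : Type*} (ξ : ℝ) (u : ι → 𝕋) : ι → ℂ :=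
  fun j => ξ * (AddCircle.toCircle (u j) : ℂ)

section TorusPoint

variable {ι : Type*} {ξ : ℝ}

theorem torus_eq_torusPoint (n : ℕ) (ξ : ℝ) (x : Fin n → ℝ) :
    torus n ξ x = torusPoint ξ fun j => (x j : 𝕋) := by
  ext j
  simp [torus, torusPoint, AddCircle.toCircle_apply_mk, Circle.coe_exp, mul_comm]

theorem norm_torusPoint (hξ : 0 ≤ ξ) (u : ι → 𝕋) (j : ι) : ‖torusPoint ξ u j‖ = ξ := by
  simp [torusPoint, abs_of_nonneg hξ, Circle.norm_coe]

theorem torusPoint_ne_zero (hξ : 0 < ξ) (u : ι → 𝕋) (j : ι) : torusPoint ξ u j ≠ 0 :=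
  norm_ne_zero_iff.1 (by rw [norm_torusPoint hξ.le]; exact hξ.ne')

theorem continuous_torusPoint (ξ : ℝ) : Continuous (torusPoint (ι := ι) ξ) :=
  continuous_pi fun j => continuous_const.mul
    (continuous_subtype_val.comp (AddCircle.continuous_toCircle.comp (continuous_apply j)))

theorem torusPoint_add_const (ξ : ℝ) (u : ι → 𝕋) (a : 𝕋) :
    torusPoint ξ (u + fun _ => a) = (AddCircle.toCircle a : ℂ) • torusPoint ξ u := by
  ext j
  simp only [torusPoint, Pi.add_apply, AddCircle.toCircle_add, Circle.coe_mul, Pi.smul_apply,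
    smul_eq_mul]
  ring

end TorusPoint

theorem exists_toCircle_zpow_ne_one {k : ℤ} (hk : k ≠ 0) :
    ∃ a : 𝕋, (AddCircle.toCircle a : ℂ) ^ k ≠ 1 := by
  refine ⟨↑(Real.pi / k), fun h => ?_⟩
  rw [← Circle.coe_zpow, AddCircle.toCircle_apply_mk, div_self Real.two_pi_pos.ne', one_mul,
    ← Circle.exp_zsmul, zsmul_eq_mul, mul_div_cancel₀ _ (Int.cast_ne_zero.2 hk)] at h
  norm_num [Circle.coe_exp, Complex.exp_pi_mul_I] at h

def sprodIntegrand {n m : ℕ} (θ ξ ξ' : ℝ) (p q : MvPolynomial (Fin n ⊕ Fin m) ℂ)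
    (w : (Fin n → 𝕋) × (Fin m → 𝕋)) : ℂ :=
  DeltaNM n m θ (torusPoint ξ w.1) (torusPoint ξ' w.2) *
    eval (Sum.elim (torusPoint ξ w.1) (torusPoint ξ' w.2)) p *
    starEval q (Sum.elim (torusPoint ξ w.1) (torusPoint ξ' w.2))

section SprodIntegrand

variable {n m : ℕ} {θ ξ ξ' : ℝ}

instance : (volume : Measure ((Fin n → 𝕋) × (Fin m → 𝕋))).IsAddRightInvariant :=
  Measure.prod.instIsAddRightInvariant

theorem sprod_eq_integral {p q : MvPolynomial (Fin n ⊕ Fin m) ℂ}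
    (h : Continuous (sprodIntegrand θ ξ ξ' p q)) :
    sprod n m θ ξ ξ' p q = ((1 / (n.factorial * m.factorial * (2 * Real.pi) ^ (n + m)) : ℝ) : ℂ) *
      ∫ w, sprodIntegrand θ ξ ξ' p q w := by
  simp_rw [sprod, torus_eq_torusPoint, ← integral_cube_cube_comp_coe h]
  rfl

theorem continuous_sprodIntegrand (hθ : 0 ≤ θ) (hξ : 0 < ξ) (hξ' : 0 < ξ') (hne : ξ ≠ ξ')
    (p q : MvPolynomial (Fin n ⊕ Fin m) ℂ) : Continuous (sprodIntegrand θ ξ ξ' p q) := by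
  have hz : Continuous fun w : (Fin n → 𝕋) × (Fin m → 𝕋) => torusPoint ξ w.1 :=
    (continuous_torusPoint ξ).comp continuous_fst
  have hz' : Continuous fun w : (Fin n → 𝕋) × (Fin m → 𝕋) => torusPoint ξ' w.2 :=
    (continuous_torusPoint ξ').comp continuous_snd
  have hv : Continuous fun w : (Fin n → 𝕋) × (Fin m → 𝕋) =>
      Sum.elim (torusPoint ξ w.1) (torusPoint ξ' w.2) := by
    refine continuous_pi fun i => ?_
    rcases i with j | k
    exacts [(continuous_apply j).comp hz, (continuous_apply k).comp hz']
  have hv0 (w : (Fin n → 𝕋) × (Fin m → 𝕋)) (i) :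
      Sum.elim (torusPoint ξ w.1) (torusPoint ξ' w.2) i ≠ 0 := by
    rcases i with j | k
    exacts [torusPoint_ne_zero hξ _ j, torusPoint_ne_zero hξ' _ k]
  have hradii (w : (Fin n → 𝕋) × (Fin m → 𝕋)) j k : torusPoint ξ w.1 j ≠ torusPoint ξ' w.2 k :=
    fun h => hne (by simpa [norm_torusPoint, hξ.le, hξ'.le] using congrArg norm h)
  exact ((hz.deltaNM hθ hz' (fun w => torusPoint_ne_zero hξ w.1)
    (fun w => torusPoint_ne_zero hξ' w.2) hradii).mul ((continuous_eval p).comp hv)).mul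
    (hv.starEval q hv0)

theorem sprodIntegrand_smul_left (c : ℂ) (p q : MvPolynomial (Fin n ⊕ Fin m) ℂ)
    (w : (Fin n → 𝕋) × (Fin m → 𝕋)) :
    sprodIntegrand θ ξ ξ' (c • p) q w = c * sprodIntegrand θ ξ ξ' p q w := by
  simp only [sprodIntegrand, smul_eval]
  ring

theorem sprodIntegrand_smul_right (c : ℂ) (p q : MvPolynomial (Fin n ⊕ Fin m) ℂ)
    (w : (Fin n → 𝕋) × (Fin m → 𝕋)) :
    sprodIntegrand θ ξ ξ' p (c • q) w = starRingEnd ℂ c * sprodIntegrand θ ξ ξ' p q w := by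
  simp only [sprodIntegrand, starEval_smul]
  ring

theorem sprodIntegrand_sum {ι κ : Type*} (s : Finset ι) (t : Finset κ)
    (P : ι → MvPolynomial (Fin n ⊕ Fin m) ℂ) (Q : κ → MvPolynomial (Fin n ⊕ Fin m) ℂ)
    (w : (Fin n → 𝕋) × (Fin m → 𝕋)) :
    sprodIntegrand θ ξ ξ' (∑ i ∈ s, P i) (∑ j ∈ t, Q j) w =
      ∑ i ∈ s, ∑ j ∈ t, sprodIntegrand θ ξ ξ' (P i) (Q j) w := by
  simp only [sprodIntegrand, map_sum, starEval_sum, Finset.mul_sum, Finset.sum_mul]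
  exact Finset.sum_comm

theorem integral_sprodIntegrand_sum
    (hcont : ∀ p q : MvPolynomial (Fin n ⊕ Fin m) ℂ, Continuous (sprodIntegrand θ ξ ξ' p q))
    {ι κ : Type*} (s : Finset ι) (t : Finset κ)
    (P : ι → MvPolynomial (Fin n ⊕ Fin m) ℂ) (Q : κ → MvPolynomial (Fin n ⊕ Fin m) ℂ) :
    ∫ w, sprodIntegrand θ ξ ξ' (∑ i ∈ s, P i) (∑ j ∈ t, Q j) w =
      ∑ i ∈ s, ∑ j ∈ t, ∫ w, sprodIntegrand θ ξ ξ' (P i) (Q j) w := by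
  have hint (p q : MvPolynomial (Fin n ⊕ Fin m) ℂ) : Integrable (sprodIntegrand θ ξ ξ' p q) :=
    (hcont p q).integrable_of_hasCompactSupport (.of_compactSpace _)
  simp_rw [sprodIntegrand_sum]
  rw [integral_finsetSum _ fun i _ => integrable_finsetSum _ fun j _ => hint _ _]
  exact Finset.sum_congr rfl fun i _ => integral_finsetSum _ fun j _ => hint _ _

theorem sprodIntegrand_add_diagonal {p q : MvPolynomial (Fin n ⊕ Fin m) ℂ} {d e : ℕ}
    (hp : p.IsHomogeneous d) (hq : q.IsHomogeneous e) (a : 𝕋) (w : (Fin n → 𝕋) × (Fin m → 𝕋)) :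
    sprodIntegrand θ ξ ξ' p q (w + (fun _ => a, fun _ => a)) =
      (AddCircle.toCircle a : ℂ) ^ ((d : ℤ) - e) * sprodIntegrand θ ξ ξ' p q w := by
  have hζ : (AddCircle.toCircle a : ℂ) ≠ 0 := Circle.coe_ne_zero _
  have helim (c : ℂ) (z : Fin n → ℂ) (z' : Fin m → ℂ) :
      Sum.elim (c • z) (c • z') = c • Sum.elim z z' := by
    ext (j | k) <;> rfl
  simp only [sprodIntegrand, Prod.fst_add, Prod.snd_add, torusPoint_add_const, deltaNM_smul θ hζ,
    helim, hp.eval_smul, starEval_smul_of_isHomogeneous hq, zpow_sub₀ hζ, zpow_natCast]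
  ring

theorem integral_sprodIntegrand_eq_zero {p q : MvPolynomial (Fin n ⊕ Fin m) ℂ} {d e : ℕ}
    (hp : p.IsHomogeneous d) (hq : q.IsHomogeneous e) (hde : d ≠ e) :
    ∫ w, sprodIntegrand θ ξ ξ' p q w = 0 := by
  obtain ⟨a, ha⟩ := exists_toCircle_zpow_ne_one (sub_ne_zero.2 (Int.natCast_inj.not.2 hde))
  exact integral_eq_zero_of_add_right_eq_mul ha (sprodIntegrand_add_diagonal hp hq a)

end SprodIntegrand

theorem euler_symmetric_general (n m : ℕ)
    (θ ξ ξ' : ℝ) (hθ : 0 < θ) (hξ : 0 < ξ) (hξ' : 0 < ξ') (hne : ξ ≠ ξ')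
    (p q : MvPolynomial (Fin n ⊕ Fin m) ℂ) :
    sprod n m θ ξ ξ' (eulerOp p) q = sprod n m θ ξ ξ' p (eulerOp q) := by
  have hcont : ∀ p q : MvPolynomial (Fin n ⊕ Fin m) ℂ, Continuous (sprodIntegrand θ ξ ξ' p q) :=
    continuous_sprodIntegrand hθ.le hξ hξ' hne
  rw [sprod_eq_integral (hcont _ _), sprod_eq_integral (hcont _ _)]
  congr 1
  conv_lhs => rw [eulerOp_eq_sum_homogeneousComponent, ← sum_homogeneousComponent q]
  conv_rhs => rw [eulerOp_eq_sum_homogeneousComponent, ← sum_homogeneousComponent p]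
  rw [integral_sprodIntegrand_sum hcont, integral_sprodIntegrand_sum hcont]
  refine Finset.sum_congr rfl fun d _ => Finset.sum_congr rfl fun e _ => ?_
  simp only [sprodIntegrand_smul_left, sprodIntegrand_smul_right, integral_const_mul,
    Complex.conj_natCast]
  obtain rfl | hde := eq_or_ne d e
  · rfl
  · rw [integral_sprodIntegrand_eq_zero (homogeneousComponent_isHomogeneous d p)
      (homogeneousComponent_isHomogeneous e q) hde, mul_zero, mul_zero]

/-- the Euler operator is symmetric with respect to `⟨·,·⟩'_{n,m,θ}`. -/
theorem euler_symmetric (n m : ℕ) (hn : 0 < n) (hm : 0 < m)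
    (θ ξ ξ' : ℝ) (hθ : 0 < θ) (hξ : 0 < ξ) (hξ' : 0 < ξ') (hne : ξ ≠ ξ')
    (p q : MvPolynomial (Fin n ⊕ Fin m) ℂ) :
    sprod n m θ ξ ξ' (eulerOp p) q = sprod n m θ ξ ξ' p (eulerOp q) :=
  euler_symmetric_general n m θ ξ ξ' hθ hξ hξ' hne p q

end
end

section
/- Let n,m be positive integers and θ>0, and let λ be a partition with λ_{n+1} ≤ m and (m^n) ⊆ λ (equivalently, λ' satisfies λ'_{m+1} ≤ n and (n^m) ⊆ λ'). Then the duality N_{n,m}(λ;θ) = b_{λ'}(1/θ)^2 · N_{m,n}(λ';1/θ) holds, where N_{n,m}(λ;θ) = N_n(e(λ;n,m);θ) N_m(s(λ;n,m);1/θ) b_{e(λ;n,m)}(θ) b_{s(λ;n,m)}(1/θ) / b_λ(θ) and N_{m,n}(λ';1/θ) = N_m(e(λ';m,n);1/θ) N_n(s(λ';m,n);θ) b_{e(λ';m,n)}(1/θ) b_{s(λ';m,n)}(θ) / b_{λ'}(1/θ). -/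
open MeasureTheory MvPolynomial Complex

noncomputable section

/-- A partition: a weakly decreasing, finitely supported sequence of naturals
(`f i` is the part `λ_{i+1}`). -/
structure Ptn where
  f : ℕ → ℕ
  anti : ∀ ⦃i j : ℕ⦄, i ≤ j → f j ≤ f i
  fin : ∃ N, ∀ i, N ≤ i → f i = 0

namespace Ptn

/-- `|λ|`. -/
def size (l : Ptn) : ℕ := ∑ᶠ i, l.f i

lemma conj_finite (l : Ptn) (k : ℕ) : {j | k + 1 ≤ l.f j}.Finite := by
  obtain ⟨N, hN⟩ := l.fin
  apply Set.Finite.subset (Set.finite_Iio N)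
  intro j hj
  simp only [Set.mem_setOf_eq] at hj
  by_contra h
  simp only [Set.mem_Iio, not_lt] at h
  have := hN j h
  omega

/-- The conjugate partition `λ'` (`conj.f k = λ'_{k+1} = #{j : λ_j ≥ k+1}`). -/
def conj (l : Ptn) : Ptn where
  f := fun k => {j | k + 1 ≤ l.f j}.ncard
  anti := by
    intro i j hij
    refine Set.ncard_le_ncard ?_ (l.conj_finite i)
    intro x hx
    simp only [Set.mem_setOf_eq] at hx ⊢
    omega
  fin := by
    refine ⟨l.f 0, fun k hk => ?_⟩
    have h : {j | k + 1 ≤ l.f j} = ∅ := by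
      ext j
      simp only [Set.mem_setOf_eq, Set.mem_empty_iff_false, iff_false, not_le]
      have := l.anti (Nat.zero_le j)
      omega
    show {j | k + 1 ≤ l.f j}.ncard = 0
    rw [h, Set.ncard_empty]

/-- `e(λ; n, m) = (max(0, λ_1 - m), …, max(0, λ_n - m))`. -/
def ePtn (l : Ptn) (n m : ℕ) : Ptn where
  f := fun j => if j < n then l.f j - m else 0
  anti := by
    intro i j hij
    by_cases hj : j < n
    · have hi : i < n := lt_of_le_of_lt hij hj
      simp only [if_pos hj, if_pos hi]
      exact Nat.sub_le_sub_right (l.anti hij) m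
    · simp only [if_neg hj]
      exact Nat.zero_le _
  fin := ⟨n, fun i hi => by simp only [if_neg (Nat.not_lt.mpr hi)]⟩

/-- `s(λ; n, m) = (max(0, λ'_1 - n), …, max(0, λ'_m - n))`. -/
def sPtn (l : Ptn) (n m : ℕ) : Ptn where
  f := fun k => if k < m then l.conj.f k - n else 0
  anti := by
    intro i j hij
    by_cases hj : j < m
    · have hi : i < m := lt_of_le_of_lt hij hj
      simp only [if_pos hj, if_pos hi]
      exact Nat.sub_le_sub_right (l.conj.anti hij) n
    · simp only [if_neg hj]
      exact Nat.zero_le _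
  fin := ⟨m, fun i hi => by simp only [if_neg (Nat.not_lt.mpr hi)]⟩

end Ptn

/-- Macdonald's norm `N_n(λ;θ)`, a product of ratios of Gamma factors over `1 ≤ j < k ≤ n`
(here `j, k` run over `0, …, n-1`, representing the rows `j+1, k+1`, so `k - j` is
unchanged). -/
def NormN (n : ℕ) (θ : ℝ) (l : Ptn) : ℝ :=
  ∏ j ∈ Finset.range n, ∏ k ∈ Finset.range n,
    if j < k then
      (Real.Gamma ((l.f j : ℝ) - (l.f k : ℝ) + θ * ((k : ℝ) - (j : ℝ) + 1)) *
        Real.Gamma ((l.f j : ℝ) - (l.f k : ℝ) + θ * ((k : ℝ) - (j : ℝ) - 1) + 1)) /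
      (Real.Gamma ((l.f j : ℝ) - (l.f k : ℝ) + θ * ((k : ℝ) - (j : ℝ))) *
        Real.Gamma ((l.f j : ℝ) - (l.f k : ℝ) + θ * ((k : ℝ) - (j : ℝ)) + 1))
    else 1

/-- `b_λ(θ) = ∏_{(j,k) ∈ λ} (λ_j - k + θ(λ'_k - j + 1)) / (λ_j - k + 1 + θ(λ'_k - j))`,
over the cells of the diagram with row `j+1` (`j : ℕ`) and column `k+1` (`k < λ_{j+1}`). -/
def bP (l : Ptn) (θ : ℝ) : ℝ :=
  ∏ᶠ j : ℕ, ∏ k ∈ Finset.range (l.f j),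
    (((l.f j : ℝ) - ((k : ℝ) + 1)) + θ * ((l.conj.f k : ℝ) - ((j : ℝ) + 1) + 1)) /
      (((l.f j : ℝ) - ((k : ℝ) + 1) + 1) + θ * ((l.conj.f k : ℝ) - ((j : ℝ) + 1)))

/-- The (quadratic) norm `N_{n,m}(λ;θ)` of a super-Jack polynomial with `(m^n) ⊆ λ`. -/
def NormNM (n m : ℕ) (θ : ℝ) (l : Ptn) : ℝ :=
  NormN n θ (l.ePtn n m) * NormN m θ⁻¹ (l.sPtn n m) *
    bP (l.ePtn n m) θ * bP (l.sPtn n m) θ⁻¹ / bP l θ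

lemma ncard_Iio_nat (n : ℕ) : (Set.Iio n).ncard = n := by
  rw [← Finset.coe_Iio, Set.ncard_coe_finset, Nat.card_Iio]

lemma ncard_Iic_nat (n : ℕ) : (Set.Iic n).ncard = n + 1 := by
  rw [← Finset.coe_Iic, Set.ncard_coe_finset, Nat.card_Iic]

/-- Auxiliary: extensionality for `Ptn`. -/
lemma Ptn.ext' {l₁ l₂ : Ptn} (h : l₁.f = l₂.f) : l₁ = l₂ := by
  cases l₁; cases l₂; cases h; rfl

lemma Ptn.conj_lt_iff (l : Ptn) (j k : ℕ) : j < l.conj.f k ↔ k < l.f j := by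
  show j < {i | k + 1 ≤ l.f i}.ncard ↔ _
  constructor
  · intro h
    by_contra hk
    push_neg at hk
    have hsub : {i | k + 1 ≤ l.f i} ⊆ Set.Iio j := by
      intro i hi
      simp only [Set.mem_setOf_eq] at hi
      by_contra hij
      simp only [Set.mem_Iio, not_lt] at hij
      have := l.anti hij
      omega
    have := Set.ncard_le_ncard hsub (Set.finite_Iio j)
    rw [ncard_Iio_nat] at this
    omega
  · intro h
    have hsub : Set.Iic j ⊆ {i | k + 1 ≤ l.f i} := by
      intro i hi
      simp only [Set.mem_Iic] at hi
      have := l.anti hi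
      simp only [Set.mem_setOf_eq]
      omega
    have := Set.ncard_le_ncard hsub (l.conj_finite k)
    rw [ncard_Iic_nat] at this
    omega

lemma Ptn.conj_conj_f (l : Ptn) (j : ℕ) : l.conj.conj.f j = l.f j := by
  show {k | j + 1 ≤ l.conj.f k}.ncard = l.f j
  have : {k | j + 1 ≤ l.conj.f k} = Set.Iio (l.f j) := by
    ext k
    simp only [Set.mem_setOf_eq, Set.mem_Iio]
    rw [Nat.succ_le_iff, l.conj_lt_iff j k]
  rw [this, ncard_Iio_nat]

/-- The single-cell factor of `bP`. -/
def cellF (l : Ptn) (θ : ℝ) (p : ℕ × ℕ) : ℝ :=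
  (((l.f p.1 : ℝ) - ((p.2 : ℝ) + 1)) + θ * ((l.conj.f p.2 : ℝ) - ((p.1 : ℝ) + 1) + 1)) /
    (((l.f p.1 : ℝ) - ((p.2 : ℝ) + 1) + 1) + θ * ((l.conj.f p.2 : ℝ) - ((p.1 : ℝ) + 1)))

lemma bP_eq_prod (l : Ptn) (θ : ℝ) (N M : ℕ) (hN : ∀ i, N ≤ i → l.f i = 0)
    (hM : ∀ j, l.f j ≤ M) :
    bP l θ = ∏ p ∈ (Finset.range N ×ˢ Finset.range M).filter (fun p => p.2 < l.f p.1),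
      cellF l θ p := by
  rw [bP, finprod_eq_prod_of_mulSupport_subset _
    (s := Finset.range N) ?_]
  · rw [Finset.prod_filter, Finset.prod_product]
    refine Finset.prod_congr rfl fun j _ => ?_
    rw [← Finset.prod_filter]
    have : Finset.filter (fun k => k < l.f j) (Finset.range M) = Finset.range (l.f j) := by
      ext a
      simp only [Finset.mem_filter, Finset.mem_range]
      have := hM j
      omega
    rw [this]
    rfl
  · intro j hj
    simp only [Finset.coe_range, Set.mem_Iio]
    by_contra h
    push_neg at h
    apply hj
    show (∏ k ∈ Finset.range (l.f j), _) = 1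
    rw [hN j h]
    simp

lemma cell_mul (θ : ℝ) (hθ : 0 < θ) (A B : ℝ) (hA : 0 ≤ A) (hB : 0 ≤ B) :
    (A + θ * (B + 1)) / (A + 1 + θ * B) * ((B + θ⁻¹ * (A + 1)) / (B + 1 + θ⁻¹ * A)) = 1 := by
  have h1 : 0 < A + 1 + θ * B := by positivity
  have h2 : 0 < A + θ * (B + 1) := by positivity
  have h3 : 0 < B + 1 + θ⁻¹ * A := by positivity
  field_simp
  ring

lemma bP_mul_conj (l : Ptn) (θ : ℝ) (hθ : 0 < θ) : bP l θ * bP l.conj θ⁻¹ = 1 := by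
  obtain ⟨N, hN⟩ := l.fin
  set M := l.f 0 with hMdef
  have hM : ∀ j, l.f j ≤ M := fun j => l.anti (Nat.zero_le j)
  have hNconj : ∀ k, M ≤ k → l.conj.f k = 0 := by
    intro k hk
    show {j | k + 1 ≤ l.f j}.ncard = 0
    have : {j | k + 1 ≤ l.f j} = ∅ := by
      ext j
      simp only [Set.mem_setOf_eq, Set.mem_empty_iff_false, iff_false, not_le]
      have := hM j
      omega
    rw [this, Set.ncard_empty]
  have hMconj : ∀ k, l.conj.f k ≤ N := by
    intro k
    show {j | k + 1 ≤ l.f j}.ncard ≤ N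
    have hsub : {j | k + 1 ≤ l.f j} ⊆ Set.Iio N := by
      intro j hj
      simp only [Set.mem_setOf_eq] at hj
      simp only [Set.mem_Iio]
      by_contra h
      push_neg at h
      have := hN j h
      omega
    have := Set.ncard_le_ncard hsub (Set.finite_Iio N)
    rwa [ncard_Iio_nat] at this
  rw [bP_eq_prod l θ N M hN hM, bP_eq_prod l.conj θ⁻¹ M N hNconj hMconj]
  have hswap : ∏ p ∈ (Finset.range M ×ˢ Finset.range N).filter (fun p => p.2 < l.conj.f p.1),
      cellF l.conj θ⁻¹ p
      = ∏ p ∈ (Finset.range N ×ˢ Finset.range M).filter (fun p => p.2 < l.f p.1),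
        cellF l.conj θ⁻¹ p.swap := by
    refine (Finset.prod_nbij' Prod.swap Prod.swap ?_ ?_ ?_ ?_ ?_).symm
    · intro p hp
      simp only [Finset.mem_filter, Finset.mem_product, Finset.mem_range] at hp ⊢
      refine ⟨⟨hp.1.2, hp.1.1⟩, ?_⟩
      rw [l.conj_lt_iff]
      exact hp.2
    · intro p hp
      simp only [Finset.mem_filter, Finset.mem_product, Finset.mem_range] at hp ⊢
      refine ⟨⟨hp.1.2, hp.1.1⟩, ?_⟩
      rw [← l.conj_lt_iff]
      exact hp.2
    · intro p _; rfl
    · intro p _; rfl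
    · intro p _; rfl
  rw [hswap, ← Finset.prod_mul_distrib]
  refine Finset.prod_eq_one fun p hp => ?_
  simp only [Finset.mem_filter, Finset.mem_product, Finset.mem_range] at hp
  obtain ⟨⟨hj, hk⟩, hcell⟩ := hp
  have hcell' : p.1 < l.conj.f p.2 := (l.conj_lt_iff p.1 p.2).mpr hcell
  have hA : (0:ℝ) ≤ (l.f p.1 : ℝ) - ((p.2 : ℝ) + 1) := by
    have : (p.2 : ℝ) + 1 ≤ (l.f p.1 : ℝ) := by exact_mod_cast hcell
    linarith
  have hB : (0:ℝ) ≤ (l.conj.f p.2 : ℝ) - ((p.1 : ℝ) + 1) := by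
    have : (p.1 : ℝ) + 1 ≤ (l.conj.f p.2 : ℝ) := by exact_mod_cast hcell'
    linarith
  have := cell_mul θ hθ _ _ hA hB
  unfold cellF
  simp only [Prod.fst_swap, Prod.snd_swap, Ptn.conj_conj_f]
  convert this using 3 <;> ring


/-- the duality `N_{n,m}(λ;θ) = b_{λ'}(1/θ)^2 N_{m,n}(λ';1/θ)`. -/
theorem normNM_duality (n m : ℕ) (hn : 0 < n) (hm : 0 < m) (θ : ℝ) (hθ : 0 < θ)
    (lam : Ptn) (hlam : lam.f n ≤ m) (hrect : ∀ j < n, m ≤ lam.f j) :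
    NormNM n m θ lam = bP lam.conj θ⁻¹ ^ 2 * NormNM m n θ⁻¹ lam.conj := by
  have h1 : lam.conj.ePtn m n = lam.sPtn n m := Ptn.ext' rfl
  have h2 : lam.conj.sPtn m n = lam.ePtn n m := by
    refine Ptn.ext' (funext fun j => ?_)
    show (if j < n then lam.conj.conj.f j - m else 0) = _
    rw [lam.conj_conj_f]
    rfl
  have hxy := bP_mul_conj lam θ hθ
  have hx : bP lam θ ≠ 0 := left_ne_zero_of_mul_eq_one hxy
  have hy : bP lam.conj θ⁻¹ ≠ 0 := right_ne_zero_of_mul_eq_one hxy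
  unfold NormNM
  rw [h1, h2, inv_inv]
  set x := bP lam θ with hxdef
  set y := bP lam.conj θ⁻¹ with hydef
  set A := NormN n θ (lam.ePtn n m)
  set B := NormN m θ⁻¹ (lam.sPtn n m)
  set C := bP (lam.ePtn n m) θ
  set D := bP (lam.sPtn n m) θ⁻¹
  have hxv : x = y⁻¹ := eq_inv_of_mul_eq_one_left hxy
  rw [hxv]
  field_simp

end
end

section
/- Let n,m be positive integers, θ>0, and ξ,ξ'>0 with ξ ≠ ξ'. Then the total integral of the weight function vanishes: (1/(2π)^{n+m}) ∫_{[0,2π]^n} dx ∫_{[0,2π]^m} dy Δ_{n,m}(z(x),w(y);θ) = 0, where z_j(x) = ξ e^{i x_j} and w_k(y) = ξ' e^{i y_k}. Equivalently, ⟨1,1⟩'_{n,m,θ} = 0. -/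
/-!
Integrate first over the variables on the smaller circle, say `z` with `|z| = ξ < ξ'`. That inner
integral over the torus is invariant under the diagonal rotation `z ↦ e^{iα} z`, and so is `Δ_n`,
so it equals its average over `α`. With `ζ = e^{iα}`, the reciprocal of the cross product
`∏ (1 - ζ z_j / w_k)(1 - w_k / (ζ z_j))` is `∏ -ζ z_j w_k / (w_k - ζ z_j)²`, holomorphic on the
closed unit disc and zero at `ζ = 0`; by the mean value property its circle average vanishes.
-/

open MeasureTheory MvPolynomial Complex

noncomputable section

open scoped Real

lemma inv_one_sub_div_mul_one_sub_div {a b : ℂ} (ha : a ≠ 0) (hb : b ≠ 0) :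
    ((1 - a / b) * (1 - b / a))⁻¹ = -(a * b) / (b - a) ^ 2 := by
  rcases eq_or_ne a b with rfl | hab
  · simp [div_self ha]
  · have : b - a ≠ 0 := sub_ne_zero.mpr hab.symm
    field_simp
    ring

def crossProd {p q : ℕ} (z : Fin p → ℂ) (w : Fin q → ℂ) : ℂ :=
  ∏ j, ∏ k, ((1 - z j / w k) * (1 - w k / z j))

lemma DeltaNM_eq_div_crossProd (n m : ℕ) (θ : ℝ) (z : Fin n → ℂ) (w : Fin m → ℂ) :
    DeltaNM n m θ z w = ((DeltaN n θ z * DeltaN m θ⁻¹ w : ℝ) : ℂ) / crossProd z w :=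
  rfl

lemma crossProd_comm {p q : ℕ} (z : Fin p → ℂ) (w : Fin q → ℂ) :
    crossProd z w = crossProd w z := by
  rw [crossProd, crossProd, Finset.prod_comm]
  simp only [mul_comm]

lemma crossProd_ne_zero {p q : ℕ} {z : Fin p → ℂ} {w : Fin q → ℂ} (hz : ∀ j, z j ≠ 0)
    (hw : ∀ k, w k ≠ 0) (hzw : ∀ j k, ‖z j‖ ≠ ‖w k‖) : crossProd z w ≠ 0 := by
  have hne : ∀ j k, z j ≠ w k := fun j k h => hzw j k (congrArg norm h)
  refine Finset.prod_ne_zero_iff.mpr fun j _ => Finset.prod_ne_zero_iff.mpr fun k _ => ?_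
  refine mul_ne_zero ?_ ?_ <;> rw [sub_ne_zero, ne_comm, Ne, div_eq_one_iff_eq (by simp [*])]
  exacts [hne j k, (hne j k).symm]

lemma continuous_crossProd {X : Type*} [TopologicalSpace X] {p q : ℕ} {u : X → Fin p → ℂ}
    {v : X → Fin q → ℂ} (hu : Continuous u) (hv : Continuous v) (hu0 : ∀ t j, u t j ≠ 0)
    (hv0 : ∀ t k, v t k ≠ 0) : Continuous fun t => crossProd (u t) (v t) := by
  refine continuous_finsetProd _ fun j _ => continuous_finsetProd _ fun k _ => ?_
  have huj : Continuous fun t => u t j := (continuous_apply j).comp hu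
  have hvk : Continuous fun t => v t k := (continuous_apply k).comp hv
  exact (continuous_const.sub (huj.div hvk (hv0 · k))).mul
    (continuous_const.sub (hvk.div huj (hu0 · j)))

lemma intervalIntegral_inv_crossProd_rotate_eq_zero {p q : ℕ} (hp : 0 < p) (hq : 0 < q)
    {z : Fin p → ℂ} {w : Fin q → ℂ} (hz : ∀ j, z j ≠ 0) (hzw : ∀ j k, ‖z j‖ < ‖w k‖) :
    ∫ α in 0..2 * π, (crossProd (fun j => circleMap 0 1 α * z j) w)⁻¹ = 0 := by
  set g : ℂ → ℂ := fun ζ => ∏ j, ∏ k, -(ζ * z j * w k) / (w k - ζ * z j) ^ 2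
  have hden : ∀ ζ ∈ Metric.closedBall (0 : ℂ) 1, ∀ j k, w k - ζ * z j ≠ 0 := by
    intro ζ hζ j k h
    rw [mem_closedBall_zero_iff] at hζ
    have := hzw j k
    rw [sub_eq_zero.mp h, norm_mul] at this
    nlinarith [norm_nonneg (z j)]
  have hg : DiffContOnCl ℂ g (Metric.ball 0 |1|) := by
    refine DifferentiableOn.diffContOnCl ?_
    rw [abs_one, closure_ball 0 one_ne_zero]
    intro ζ hζ
    refine (DifferentiableAt.fun_finsetProd fun j _ =>
      DifferentiableAt.fun_finsetProd fun k _ => ?_).differentiableWithinAt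
    exact .div (by fun_prop) (by fun_prop) (pow_ne_zero 2 (hden ζ hζ j k))
  have hg0 : g 0 = 0 := by
    obtain ⟨j⟩ : Nonempty (Fin p) := Fin.pos_iff_nonempty.mp hp
    obtain ⟨k⟩ : Nonempty (Fin q) := Fin.pos_iff_nonempty.mp hq
    exact Finset.prod_eq_zero (Finset.mem_univ j)
      (Finset.prod_eq_zero (Finset.mem_univ k) (by simp))
  have hinv : ∀ α : ℝ,
      (crossProd (fun j => circleMap 0 1 α * z j) w)⁻¹ = g (circleMap 0 1 α) := by
    intro α
    have hw : ∀ k, w k ≠ 0 := fun k =>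
      norm_pos_iff.mp ((norm_nonneg _).trans_lt (hzw ⟨0, hp⟩ k))
    have hc : circleMap 0 1 α ≠ 0 := circleMap_ne_center one_ne_zero
    simp only [crossProd, ← Finset.prod_inv_distrib, g,
      inv_one_sub_div_mul_one_sub_div (mul_ne_zero hc (hz _)) (hw _)]
  calc ∫ α in 0..2 * π, (crossProd (fun j => circleMap 0 1 α * z j) w)⁻¹
      = ∫ α in 0..2 * π, g (circleMap 0 1 α) := by simp only [hinv]
    _ = (2 * π) • Real.circleAverage g 0 1 := by
      rw [Real.circleAverage_def, smul_inv_smul₀ Real.two_pi_pos.ne']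
    _ = 0 := by rw [hg.circleAverage, hg0, smul_zero]

lemma restrict_univ_pi_Icc_eq_pi_restrict_Ioc {ι : Type*} [Fintype ι] (a b : ℝ) :
    (volume : Measure (ι → ℝ)).restrict (Set.univ.pi fun _ => Set.Icc a b) =
      Measure.pi fun _ => volume.restrict (Set.Ioc a b) := by
  rw [volume_pi, Measure.restrict_pi_pi]
  simp_rw [Measure.restrict_congr_set Ioc_ae_eq_Icc]

lemma setIntegral_univ_pi_Icc_comp_add_right {ι : Type*} [Fintype ι] {E : Type*}
    [NormedAddCommGroup E] [NormedSpace ℝ E] {T : ℝ} (hT : 0 < T) {f : (ι → ℝ) → E}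
    (hf : StronglyMeasurable f) (hper : ∀ x (k : ι → ℤ), f (fun i => x i + k i * T) = f x)
    (c : ι → ℝ) :
    ∫ x in Set.univ.pi (fun _ => Set.Icc 0 T), f (x + c) =
      ∫ x in Set.univ.pi (fun _ => Set.Icc 0 T), f x := by
  have : Fact (0 < T) := ⟨hT⟩
  let Φ : (ι → ℝ) → (ι → AddCircle T) := fun x i => (x i : AddCircle T)
  let F : (ι → AddCircle T) → E := fun u => f fun i => (AddCircle.equivIco T 0 (u i) : ℝ)
  have hΦ : MeasurePreserving Φ (Measure.pi fun _ => volume.restrict (Set.Ioc 0 (0 + T)))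
      (Measure.pi fun _ => volume) :=
    measurePreserving_pi _ _ fun _ => AddCircle.measurePreserving_mk T 0
  have hF : StronglyMeasurable F :=
    hf.comp_measurable (measurable_pi_lambda _ fun i => measurable_subtype_coe.comp
      ((AddCircle.measurableEquivIco T 0).measurable.comp (measurable_pi_apply i)))
  -- `equivIco` picks the representative `t - ⌊t / T⌋ * T` of `t` in `[0, T)`.
  have hFΦ : ∀ x, F (Φ x) = f x := by
    intro x
    have hrep : ∀ t : ℝ,
        (AddCircle.equivIco T 0 (t : AddCircle T) : ℝ) = t + (-⌊t / T⌋ : ℤ) * T := by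
      intro t
      rw [AddCircle.coe_equivIco_mk_apply, Int.fract]
      push_cast
      rw [sub_mul, div_mul_cancel₀ _ hT.ne']
      ring
    simp only [F, Φ, hrep]
    exact hper x _
  have hΦ_add : ∀ x, Φ (x + c) = Φ x + Φ c := fun _ => rfl
  have transfer : ∀ G : (ι → AddCircle T) → E, StronglyMeasurable G →
      ∫ x, G (Φ x) ∂(Measure.pi fun _ => volume.restrict (Set.Ioc 0 (0 + T))) =
        ∫ u, G u ∂(Measure.pi fun _ => volume) := fun G hG => by
    rw [← hΦ.map_eq, integral_map hΦ.measurable.aemeasurable hG.aestronglyMeasurable]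
  rw [restrict_univ_pi_Icc_eq_pi_restrict_Ioc, ← zero_add T]
  calc ∫ x, f (x + c) ∂(Measure.pi fun _ => volume.restrict (Set.Ioc 0 (0 + T)))
      = ∫ u, F (u + Φ c) ∂(Measure.pi fun _ => volume) := by
        rw [← transfer (fun u => F (u + Φ c)) (hF.comp_measurable (measurable_add_const _))]
        simp only [← hΦ_add, hFΦ]
    _ = ∫ u, F u ∂(Measure.pi fun _ => volume) := integral_add_right_eq_self F (Φ c)
    _ = ∫ x, f x ∂(Measure.pi fun _ => volume.restrict (Set.Ioc 0 (0 + T))) := by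
        rw [← transfer F hF]
        simp only [hFΦ]

lemma setIntegral_cube_eq_zero_of_diagonal {p : ℕ} {f : (Fin p → ℝ) → ℂ} (hf : Continuous f)
    (hper : ∀ x (k : Fin p → ℤ), f (fun i => x i + k i * (2 * π)) = f x)
    (hdiag : ∀ x, ∫ α in 0..2 * π, f (x + fun _ => α) = 0) :
    ∫ x in cube p, f x = 0 := by
  have hint : Integrable (Function.uncurry fun α x => f (x + fun _ => α))
      ((volume.restrict (Set.Ioc 0 (2 * π))).prod (volume.restrict (cube p))) := by
    rw [Measure.prod_restrict, ← Measure.volume_eq_prod]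
    refine IntegrableOn.mono_set ?_ (Set.prod_mono Set.Ioc_subset_Icc_self subset_rfl)
    exact (hf.comp (by fun_prop)).continuousOn.integrableOn_compact
      (isCompact_Icc.prod (isCompact_univ_pi fun _ => isCompact_Icc))
  have h : (2 * π) • ∫ x in cube p, f x = 0 := calc
    (2 * π) • ∫ x in cube p, f x = ∫ α in 0..2 * π, ∫ x in cube p, f x := by
      rw [intervalIntegral.integral_const, sub_zero]
    _ = ∫ α in 0..2 * π, ∫ x in cube p, f (x + fun _ => α) := by
      simp only [cube, setIntegral_univ_pi_Icc_comp_add_right Real.two_pi_pos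
        hf.stronglyMeasurable hper]
    _ = ∫ x in cube p, ∫ α in 0..2 * π, f (x + fun _ => α) := by
      simp only [intervalIntegral.integral_of_le Real.two_pi_pos.le]
      exact integral_integral_swap hint
    _ = 0 := by simp only [hdiag, integral_zero]
  exact (smul_eq_zero.mp h).resolve_left Real.two_pi_pos.ne'

lemma torus_ne_zero {p : ℕ} {η : ℝ} (hη : η ≠ 0) (x : Fin p → ℝ) (j : Fin p) :
    torus p η x j ≠ 0 :=
  mul_ne_zero (ofReal_ne_zero.mpr hη) (exp_ne_zero _)

lemma norm_torus {p : ℕ} {η : ℝ} (hη : 0 ≤ η) (x : Fin p → ℝ) (j : Fin p) :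
    ‖torus p η x j‖ = η := by
  rw [torus, norm_mul, Complex.norm_of_nonneg hη, mul_comm I, norm_exp_ofReal_mul_I, mul_one]

lemma continuous_torus (p : ℕ) (η : ℝ) : Continuous (torus p η) := by
  unfold torus
  fun_prop

lemma torus_add_const (p : ℕ) (η : ℝ) (x : Fin p → ℝ) (α : ℝ) :
    torus p η (x + fun _ => α) = fun j => circleMap 0 1 α * torus p η x j := by
  funext j
  simp only [torus, circleMap_zero, Pi.add_apply, ofReal_add, ofReal_one, one_mul, mul_add,
    exp_add]
  ring_nf

lemma torus_add_int_mul_two_pi (p : ℕ) (η : ℝ) (x : Fin p → ℝ) (k : Fin p → ℤ) :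
    torus p η (fun i => x i + k i * (2 * π)) = torus p η x := by
  funext j
  have : I * ((x j + k j * (2 * π) : ℝ) : ℂ) = I * x j + k j * (2 * π * I) := by
    push_cast
    ring
  rw [torus, torus, this, exp_add, exp_int_mul_two_pi_mul_I, mul_one]

lemma DeltaN_const_mul (N : ℕ) (θ : ℝ) (z : Fin N → ℂ) {c : ℂ} (hc : c ≠ 0) :
    DeltaN N θ (fun j => c * z j) = DeltaN N θ z := by
  simp only [DeltaN, mul_div_mul_left _ _ hc]

lemma Continuous.DeltaN {X : Type*} [TopologicalSpace X] {N : ℕ} {θ : ℝ} (hθ : 0 ≤ θ)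
    {u : X → Fin N → ℂ} (hu : Continuous u) (hu0 : ∀ t j, u t j ≠ 0) :
    Continuous fun t => DeltaN N θ (u t) := by
  refine continuous_finsetProd _ fun j _ => continuous_finsetProd _ fun k _ => ?_
  split_ifs
  · refine .rpow_const (.pow (continuous_norm.comp (continuous_const.sub ?_)) 2)
      fun _ => Or.inr hθ
    exact ((continuous_apply j).comp hu).div ((continuous_apply k).comp hu) (hu0 · k)
  · exact continuous_const

lemma setIntegral_DeltaN_div_crossProd_eq_zero {p q : ℕ} (hp : 0 < p) (hq : 0 < q) {θ : ℝ}
    (hθ : 0 ≤ θ) {η : ℝ} (hη : 0 < η) {w : Fin q → ℂ} (hw : ∀ k, η < ‖w k‖) (C : ℝ) :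
    ∫ x in cube p, ((DeltaN p θ (torus p η x) * C : ℝ) : ℂ) / crossProd (torus p η x) w = 0 := by
  have hw0 : ∀ k, w k ≠ 0 := fun k => norm_pos_iff.mp (hη.trans (hw k))
  have hzw : ∀ x j k, ‖torus p η x j‖ < ‖w k‖ := fun x j k => by
    rw [norm_torus hη.le]
    exact hw k
  refine setIntegral_cube_eq_zero_of_diagonal ?_ ?_ fun x => ?_
  · refine .div (continuous_ofReal.comp (.mul ?_ continuous_const)) ?_ fun x => ?_
    · exact (continuous_torus p η).DeltaN hθ fun x => torus_ne_zero hη.ne' x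
    · exact continuous_crossProd (continuous_torus p η) continuous_const
        (fun x => torus_ne_zero hη.ne' x) fun _ => hw0
    · exact crossProd_ne_zero (torus_ne_zero hη.ne' x) hw0 fun j k => (hzw x j k).ne
  · intro x k
    simp only [torus_add_int_mul_two_pi]
  · simp only [torus_add_const, DeltaN_const_mul _ _ _ (circleMap_ne_center one_ne_zero),
      div_eq_mul_inv, intervalIntegral.integral_const_mul]
    rw [intervalIntegral_inv_crossProd_rotate_eq_zero hp hq (torus_ne_zero hη.ne' x) (hzw x),
      mul_zero]

section Weight

variable {n m : ℕ} {θ ξ ξ' : ℝ}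

lemma integrable_DeltaNM_torus (hθ : 0 ≤ θ) (hξ : 0 < ξ) (hξ' : 0 < ξ') (hne : ξ ≠ ξ') :
    Integrable (Function.uncurry fun x y => DeltaNM n m θ (torus n ξ x) (torus m ξ' y))
      ((volume.restrict (cube n)).prod (volume.restrict (cube m))) := by
  have hz : Continuous fun x : (Fin n → ℝ) × (Fin m → ℝ) => torus n ξ x.1 :=
    (continuous_torus n ξ).comp continuous_fst
  have hw : Continuous fun x : (Fin n → ℝ) × (Fin m → ℝ) => torus m ξ' x.2 :=
    (continuous_torus m ξ').comp continuous_snd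
  have hz0 : ∀ (x : (Fin n → ℝ) × (Fin m → ℝ)) j, torus n ξ x.1 j ≠ 0 :=
    fun x => torus_ne_zero hξ.ne' x.1
  have hw0 : ∀ (x : (Fin n → ℝ) × (Fin m → ℝ)) k, torus m ξ' x.2 k ≠ 0 :=
    fun x => torus_ne_zero hξ'.ne' x.2
  have hcont : Continuous (Function.uncurry fun x y =>
      DeltaNM n m θ (torus n ξ x) (torus m ξ' y)) := by
    refine .div (continuous_ofReal.comp ((hz.DeltaN hθ hz0).mul
      (hw.DeltaN (inv_nonneg.mpr hθ) hw0))) (continuous_crossProd hz hw hz0 hw0)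
      fun x => crossProd_ne_zero (hz0 x) (hw0 x) fun j k => ?_
    rw [norm_torus hξ.le, norm_torus hξ'.le]
    exact hne
  rw [Measure.prod_restrict, ← Measure.volume_eq_prod]
  exact hcont.continuousOn.integrableOn_compact
    ((isCompact_univ_pi fun _ => isCompact_Icc).prod (isCompact_univ_pi fun _ => isCompact_Icc))

lemma setIntegral_DeltaNM_torus_fst_eq_zero (hn : 0 < n) (hm : 0 < m) (hθ : 0 ≤ θ) (hξ : 0 < ξ)
    (hlt : ξ < ξ') (y : Fin m → ℝ) :
    ∫ x in cube n, DeltaNM n m θ (torus n ξ x) (torus m ξ' y) = 0 :=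
  setIntegral_DeltaN_div_crossProd_eq_zero hn hm hθ hξ
    (fun k => by rwa [norm_torus (hξ.trans hlt).le]) _

lemma setIntegral_DeltaNM_torus_snd_eq_zero (hn : 0 < n) (hm : 0 < m) (hθ : 0 ≤ θ)
    (hξ' : 0 < ξ') (hlt : ξ' < ξ) (x : Fin n → ℝ) :
    ∫ y in cube m, DeltaNM n m θ (torus n ξ x) (torus m ξ' y) = 0 := by
  simp only [DeltaNM_eq_div_crossProd, mul_comm (DeltaN n θ _), crossProd_comm (torus n ξ x)]
  exact setIntegral_DeltaN_div_crossProd_eq_zero hm hn (inv_nonneg.mpr hθ) hξ'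
    (fun j => by rwa [norm_torus (hξ'.trans hlt).le]) _

end Weight

/-- the total integral of the weight function vanishes, i.e.
`⟨1,1⟩'_{n,m,θ} = 0`. -/
theorem weight_total_integral_zero (n m : ℕ) (hn : 0 < n) (hm : 0 < m) (θ : ℝ) (hθ : 0 < θ)
    (ξ ξ' : ℝ) (hξ : 0 < ξ) (hξ' : 0 < ξ') (hne : ξ ≠ ξ') :
    ((1 / (2 * Real.pi) ^ (n + m) : ℝ) : ℂ) *
        (∫ x in cube n, ∫ y in cube m, DeltaNM n m θ (torus n ξ x) (torus m ξ' y)) = 0 ∧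
      sprod n m θ ξ ξ' 1 1 = 0 := by
  have hzero : ∫ x in cube n, ∫ y in cube m, DeltaNM n m θ (torus n ξ x) (torus m ξ' y) = 0 := by
    rcases hne.lt_or_gt with hlt | hlt
    · rw [integral_integral_swap (integrable_DeltaNM_torus hθ.le hξ hξ' hne)]
      simp only [setIntegral_DeltaNM_torus_fst_eq_zero hn hm hθ.le hξ hlt, integral_zero]
    · simp only [setIntegral_DeltaNM_torus_snd_eq_zero hn hm hθ.le hξ' hlt, integral_zero]
  refine ⟨by rw [hzero, mul_zero], ?_⟩
  simp only [sprod, starEval, map_one, mul_one, hzero, mul_zero]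

end
end
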